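/- arXiv:math-ph/0309044 — 4 statements merged into one kernel-verified Lean document; each statement's English description precedes it below -/
import Mathlib

section
/- Suppose S and T are bounded operators on H satisfying the symplectic relations. Then S*S ≥ 1 and SS* ≥ 1; in particular S is bijective with bounded inverse S⁻¹ and ‖S⁻¹‖ ≤ 1. -/
noncomputable section

open ContinuousLinearMap Filter
open scoped Topology

/-- `conj ∘ conj = id` as a `RingHomCompTriple`, so that conjugate-linear maps compose. -/
instance : RingHomCompTriple (starRingEnd ℂ) (starRingEnd ℂ) (RingHom.id ℂ) :=
  ⟨RingHom.ext fun z => Complex.conj_conj z⟩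

variable {H : Type*} [NormedAddCommGroup H] [InnerProductSpace ℂ H] [CompleteSpace H]

/-- For a conjugation `Γ` (a conjugate-linear isometric involution) and a bounded operator `X`,
the operator `X̄ = Γ ∘ X ∘ Γ`. -/
def conjOp (Γ : H →ₛₗᵢ[starRingEnd ℂ] H) (X : H →L[ℂ] H) : H →L[ℂ] H :=
  Γ.toContinuousLinearMap.comp (X.comp Γ.toContinuousLinearMap)

/-- The Hilbert space direct sum `H ⊕ H`. -/
abbrev H2 (H : Type*) [NormedAddCommGroup H] [InnerProductSpace ℂ H] : Type _ :=
  WithLp 2 (H × H)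

/-- The element `(φ, ψ)` of `H ⊕ H`. -/
def mk2 (φ ψ : H) : H2 H := (WithLp.equiv 2 (H × H)).symm (φ, ψ)

/-- The inclusion `f ↦ (f, 0)` of `H` into `H ⊕ H`. -/
def inc1 : H →L[ℂ] H2 H :=
  (WithLp.prodContinuousLinearEquiv 2 ℂ H H).symm.toContinuousLinearMap.comp
    (ContinuousLinearMap.inl ℂ H H)

/-- The inclusion `f ↦ (0, f)` of `H` into `H ⊕ H`. -/
def inc2 : H →L[ℂ] H2 H :=
  (WithLp.prodContinuousLinearEquiv 2 ℂ H H).symm.toContinuousLinearMap.comp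
    (ContinuousLinearMap.inr ℂ H H)

/-- The projection `(φ, ψ) ↦ φ` of `H ⊕ H` onto the first coordinate. -/
def proj1 : H2 H →L[ℂ] H :=
  (ContinuousLinearMap.fst ℂ H H).comp
    (WithLp.prodContinuousLinearEquiv 2 ℂ H H).toContinuousLinearMap

/-- The projection `(φ, ψ) ↦ ψ` of `H ⊕ H` onto the second coordinate. -/
def proj2 : H2 H →L[ℂ] H :=
  (ContinuousLinearMap.snd ℂ H H).comp
    (WithLp.prodContinuousLinearEquiv 2 ℂ H H).toContinuousLinearMap

/-- The block `B₁₁ f = P₁ B (f, 0)` of an operator `B` on `H ⊕ H`. -/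
def blk11 (B : H2 H →L[ℂ] H2 H) : H →L[ℂ] H := proj1.comp (B.comp inc1)

/-- The block `B₂₁ f = P₂ B (f, 0)` of an operator `B` on `H ⊕ H`. -/
def blk21 (B : H2 H →L[ℂ] H2 H) : H →L[ℂ] H := proj2.comp (B.comp inc1)

/-- The block `B₁₂ f = P₁ B (0, f)` of an operator `B` on `H ⊕ H`. -/
def blk12 (B : H2 H →L[ℂ] H2 H) : H →L[ℂ] H := proj1.comp (B.comp inc2)

/-- The block `B₂₂ f = P₂ B (0, f)` of an operator `B` on `H ⊕ H`. -/
def blk22 (B : H2 H →L[ℂ] H2 H) : H →L[ℂ] H := proj2.comp (B.comp inc2)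

/-- `X` is Hilbert–Schmidt with respect to the Hilbert basis `b`. -/
def IsHS {E : Type*} [NormedAddCommGroup E] [InnerProductSpace ℂ E] {ι : Type*}
    (b : HilbertBasis ι ℂ E) (X : E →L[ℂ] E) : Prop :=
  Summable fun i => ‖X (b i)‖ ^ 2

/-- The Hilbert–Schmidt norm `‖X‖₂ = (∑ᵢ ‖X eᵢ‖²)^{1/2}` with respect to the Hilbert basis `b`. -/
def hsNorm {E : Type*} [NormedAddCommGroup E] [InnerProductSpace ℂ E] {ι : Type*}
    (b : HilbertBasis ι ℂ E) (X : E →L[ℂ] E) : ℝ :=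
  Real.sqrt (∑' i, ‖X (b i)‖ ^ 2)

/-- The symplectic relations for the pair `(S, T)` relative to the conjugation `Γ`:
`S*S − T*T = 1`, `S̄*T − T̄*S = 0`, `SS* − (TT*)‾ = 1`, `TS* − (ST*)‾ = 0`. -/
def SympRel (Γ : H →ₛₗᵢ[starRingEnd ℂ] H) (S T : H →L[ℂ] H) : Prop :=
  adjoint S ∘L S - adjoint T ∘L T = 1 ∧
  adjoint (conjOp Γ S) ∘L T - adjoint (conjOp Γ T) ∘L S = 0 ∧
  S ∘L adjoint S - conjOp Γ (T ∘L adjoint T) = 1 ∧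
  T ∘L adjoint S - conjOp Γ (S ∘L adjoint T) = 0

/-!
`S*S − 1 = T*T` and `SS* − 1 = (TT*)‾` are positive, since conjugation by `Γ` preserves
positivity. Hence `‖x‖ ≤ ‖S x‖` and `‖x‖ ≤ ‖S* x‖`: the first makes `S` injective with closed
range, the second makes that range dense, so `S` is invertible, and the first bound is then
`‖S⁻¹‖ ≤ 1`.
-/

open scoped InnerProductSpace

section ConjugateLinearIsometry

variable {E F : Type*} [NormedAddCommGroup E] [InnerProductSpace ℂ E]
  [NormedAddCommGroup F] [InnerProductSpace ℂ F]

theorem inner_map_map_of_conjLinear (Γ : E →ₛₗᵢ[starRingEnd ℂ] F) (x y : E) :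
    ⟪Γ x, Γ y⟫_ℂ = ⟪y, x⟫_ℂ := by
  rw [← inner_conj_symm y x, inner_eq_sum_norm_sq_div_four (Γ x) (Γ y),
    inner_eq_sum_norm_sq_div_four x y]
  have h₁ : ‖Γ x + Γ y‖ = ‖x + y‖ := by rw [← map_add, Γ.norm_map]
  have h₂ : ‖Γ x - Γ y‖ = ‖x - y‖ := by rw [← map_sub, Γ.norm_map]
  have h₃ : ‖Γ x + (RCLike.I : ℂ) • Γ y‖ = ‖x - (RCLike.I : ℂ) • y‖ := by
    rw [← Γ.norm_map, map_sub, map_smulₛₗ]; simp [sub_eq_add_neg]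
  have h₄ : ‖Γ x - (RCLike.I : ℂ) • Γ y‖ = ‖x + (RCLike.I : ℂ) • y‖ := by
    rw [← Γ.norm_map, map_add, map_smulₛₗ]; simp [sub_eq_add_neg]
  rw [h₁, h₂, h₃, h₄]
  simp only [map_div₀, map_add, map_sub, map_mul, map_pow, RCLike.conj_I,
    RCLike.conj_ofReal, map_ofNat]
  ring

theorem inner_map_left_comm_of_involutive (Γ : E →ₛₗᵢ[starRingEnd ℂ] E)
    (hΓ : ∀ x, Γ (Γ x) = x) (x y : E) : ⟪Γ x, y⟫_ℂ = ⟪Γ y, x⟫_ℂ := by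
  conv_lhs => rw [← hΓ y]
  exact inner_map_map_of_conjLinear Γ x (Γ y)

end ConjugateLinearIsometry

theorem isPositive_conjOp {H : Type*} [NormedAddCommGroup H]
    [InnerProductSpace ℂ H] (Γ : H →ₛₗᵢ[starRingEnd ℂ] H) (hΓ : ∀ x, Γ (Γ x) = x)
    {A : H →L[ℂ] H} (hA : A.IsPositive) : (conjOp Γ A).IsPositive := by
  have key : ∀ x y, ⟪conjOp Γ A x, y⟫_ℂ = ⟪Γ y, A (Γ x)⟫_ℂ := fun x y =>
    inner_map_left_comm_of_involutive Γ hΓ (A (Γ x)) y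
  refine ⟨fun x y => ?_, fun x => ?_⟩
  · change ⟪conjOp Γ A x, y⟫_ℂ = ⟪x, conjOp Γ A y⟫_ℂ
    rw [key, ← inner_conj_symm x, key, inner_conj_symm]
    exact (hA.inner_left_eq_inner_right _ _).symm
  · simpa only [reApplyInnerSelf, key] using hA.re_inner_nonneg_right (Γ x)

namespace ContinuousLinearMap

variable {𝕜 E F : Type*} [RCLike 𝕜] [NormedAddCommGroup E] [InnerProductSpace 𝕜 E]
  [CompleteSpace E] [NormedAddCommGroup F] [InnerProductSpace 𝕜 F] [CompleteSpace F]

theorem norm_le_norm_apply_of_isPositive_adjoint_comp_self_sub_one {S : E →L[𝕜] F}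
    (hS : (adjoint S ∘L S - 1).IsPositive) (x : E) : ‖x‖ ≤ ‖S x‖ := by
  have h := hS.re_inner_nonneg_left x
  rw [sub_apply, inner_sub_left, map_sub, comp_apply, adjoint_inner_left, one_apply_eq_self,
    inner_self_eq_norm_sq, inner_self_eq_norm_sq, sub_nonneg] at h
  exact pow_le_pow_iff_left₀ (norm_nonneg _) (norm_nonneg _) two_ne_zero |>.mp h

theorem bijective_of_le_norm_apply_of_le_norm_adjoint_apply {S : E →L[𝕜] F}
    (hS : ∀ x, ‖x‖ ≤ ‖S x‖) (hS' : ∀ y, ‖y‖ ≤ ‖adjoint S y‖) : Function.Bijective S := by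
  refine (bijective_iff_dense_range_and_antilipschitz S).mpr ⟨?_, 1, ?_⟩
  · rw [Submodule.topologicalClosure_eq_top_iff, orthogonal_range, Submodule.eq_bot_iff]
    intro y hy
    simpa [show adjoint S y = 0 from hy] using hS' y
  · exact S.antilipschitz_of_bound fun x => by simpa using hS x

theorem exists_inverse_of_le_norm_apply_of_le_norm_adjoint_apply {S : E →L[𝕜] E}
    (hS : ∀ x, ‖x‖ ≤ ‖S x‖) (hS' : ∀ y, ‖y‖ ≤ ‖adjoint S y‖) :
    ∃ Sinv : E →L[𝕜] E, Sinv ∘L S = 1 ∧ S ∘L Sinv = 1 ∧ ‖Sinv‖ ≤ 1 := by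
  obtain ⟨u, rfl⟩ := isUnit_iff_bijective.mpr
    (bijective_of_le_norm_apply_of_le_norm_adjoint_apply hS hS')
  refine ⟨↑u⁻¹, u.inv_mul, u.mul_inv, opNorm_le_bound _ zero_le_one fun y => ?_⟩
  calc ‖(↑u⁻¹ : E →L[𝕜] E) y‖ ≤ ‖(u : E →L[𝕜] E) ((↑u⁻¹ : E →L[𝕜] E) y)‖ := hS _
    _ = 1 * ‖y‖ := by rw [one_mul]; exact congrArg norm congr($(u.mul_inv) y)

end ContinuousLinearMap

/-- the symplectic relations imply `S*S ≥ 1`, `SS* ≥ 1`, and `S` is bijective with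
bounded inverse of norm at most `1`. -/
theorem stmt1 (Γ : H →ₛₗᵢ[starRingEnd ℂ] H) (hΓ : ∀ x, Γ (Γ x) = x)
    (S T : H →L[ℂ] H) (hsymp : SympRel Γ S T) :
    (adjoint S ∘L S - 1).IsPositive ∧ (S ∘L adjoint S - 1).IsPositive ∧
      ∃ Sinv : H →L[ℂ] H, Sinv ∘L S = 1 ∧ S ∘L Sinv = 1 ∧ ‖Sinv‖ ≤ 1 := by
  obtain ⟨hST, -, hST', -⟩ := hsymp
  have hS : (adjoint S ∘L S - 1).IsPositive := by
    rw [← hST, sub_sub_cancel]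
    exact isPositive_adjoint_comp_self T
  have hS' : (S ∘L adjoint S - 1).IsPositive := by
    rw [← hST', sub_sub_cancel]
    exact isPositive_conjOp Γ hΓ (isPositive_self_comp_adjoint T)
  refine ⟨hS, hS', exists_inverse_of_le_norm_apply_of_le_norm_adjoint_apply
    (norm_le_norm_apply_of_isPositive_adjoint_comp_self_sub_one hS)
    (norm_le_norm_apply_of_isPositive_adjoint_comp_self_sub_one ?_)⟩
  rwa [adjoint_adjoint]
end
end

section
/- Suppose S and T are bounded operators on H satisfying the symplectic relations, so that S is boundedly invertible. Then Γ∘(T∘S⁻¹)*∘Γ = T∘S⁻¹, i.e. the operator K₁ = TS⁻¹ satisfies K̄₁* = K₁. -/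
noncomputable section

open ContinuousLinearMap Filter
open scoped Topology

variable {H : Type*} [NormedAddCommGroup H] [InnerProductSpace ℂ H] [CompleteSpace H]

/-!
Conjugation by `Γ` is multiplicative, and since `Γ` is antiunitary (`⟪Γx, Γy⟫ = ⟪y, x⟫`) it
commutes with taking adjoints. The second symplectic relation `S̄*T = T̄*S` together with
`S S⁻¹ = 1` gives `T̄* = S̄* (T S⁻¹)`, hence
`(T S⁻¹)‾* = (S̄⁻¹)* T̄* = (S S⁻¹)‾* (T S⁻¹) = T S⁻¹`.
-/

open scoped InnerProductSpace

theorem map_star_mul_eq_self_of_mul_eq_one {R : Type*} [Monoid R] [StarMul R] (f : R →* R)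
    (hf : ∀ x, star (f x) = f (star x)) {S T Sinv : R}
    (h : star (f S) * T = star (f T) * S) (hS : S * Sinv = 1) :
    f (star (T * Sinv)) = T * Sinv :=
  calc f (star (T * Sinv))
      = star (f Sinv) * (star (f T) * S) * Sinv := by
        rw [star_mul, map_mul, ← hf, ← hf, mul_assoc _ _ Sinv, mul_assoc _ S, hS, mul_one]
    _ = star (f (S * Sinv)) * (T * Sinv) := by
        rw [← h, map_mul, star_mul]; simp only [mul_assoc]
    _ = T * Sinv := by rw [hS, map_one, star_one, one_mul]

open Complex in
theorem LinearIsometry.inner_map_map_of_starLinear {E : Type*} [SeminormedAddCommGroup E]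
    [InnerProductSpace ℂ E] (Γ : E →ₗᵢ⋆[ℂ] E) (x y : E) : ⟪Γ x, Γ y⟫_ℂ = ⟪y, x⟫_ℂ := by
  have norm_I_smul (z : E) : ‖I • z‖ = ‖z‖ := by rw [norm_smul, norm_I, one_mul]
  have h₁ : ‖y - I • x‖ = ‖x + I • y‖ := by
    rw [← norm_I_smul, smul_sub, smul_smul, I_mul_I, neg_one_smul, sub_neg_eq_add, add_comm]
  have h₂ : ‖y + I • x‖ = ‖x - I • y‖ := by
    rw [← norm_I_smul (x - _), smul_sub, smul_smul, I_mul_I, neg_one_smul, sub_neg_eq_add,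
      add_comm]
  have I_smul_map (z : E) : I • Γ z = Γ (-(I • z)) := by
    rw [map_neg, map_smulₛₗ, conj_I, neg_smul, neg_neg]
  rw [inner_eq_sum_norm_sq_div_four (𝕜 := ℂ) (Γ x), inner_eq_sum_norm_sq_div_four (𝕜 := ℂ) y]
  simp only [RCLike.I_to_complex, I_smul_map, ← map_add, ← map_sub, Γ.norm_map, sub_neg_eq_add,
    ← sub_eq_add_neg, norm_sub_rev y x, add_comm y x, h₁, h₂]

section conjOp

variable (Γ : H →ₗᵢ⋆[ℂ] H) (hΓ : ∀ x, Γ (Γ x) = x)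
include hΓ

omit [CompleteSpace H] in
theorem conjOp_comp (A B : H →L[ℂ] H) : conjOp Γ (A ∘L B) = conjOp Γ A ∘L conjOp Γ B := by
  ext x; simp [conjOp, hΓ]

omit [CompleteSpace H] in
theorem conjOp_one : conjOp Γ (1 : H →L[ℂ] H) = 1 := by
  ext x; simp [conjOp, hΓ]

theorem adjoint_conjOp (X : H →L[ℂ] H) : adjoint (conjOp Γ X) = conjOp Γ (adjoint X) := by
  refine ((eq_adjoint_iff _ _).mpr fun x y => ?_).symm
  calc ⟪Γ (adjoint X (Γ x)), y⟫_ℂ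
      = ⟪Γ (adjoint X (Γ x)), Γ (Γ y)⟫_ℂ := by rw [hΓ]
    _ = ⟪Γ (Γ x), Γ (X (Γ y))⟫_ℂ := by
        rw [Γ.inner_map_map_of_starLinear, Γ.inner_map_map_of_starLinear, adjoint_inner_right]
    _ = ⟪x, Γ (X (Γ y))⟫_ℂ := by rw [hΓ]

def conjOpHom : (H →L[ℂ] H) →* (H →L[ℂ] H) where
  toFun := conjOp Γ
  map_one' := conjOp_one Γ hΓ
  map_mul' := conjOp_comp Γ hΓ

end conjOp

theorem stmt3_general (Γ : H →ₛₗᵢ[starRingEnd ℂ] H) (hΓ : ∀ x, Γ (Γ x) = x)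
    (S T : H →L[ℂ] H) (hsymp : SympRel Γ S T)
    (Sinv : H →L[ℂ] H) (hSinv₂ : S ∘L Sinv = 1) :
    conjOp Γ (adjoint (T ∘L Sinv)) = T ∘L Sinv :=
  map_star_mul_eq_self_of_mul_eq_one (conjOpHom Γ hΓ) (adjoint_conjOp Γ hΓ)
    (sub_eq_zero.mp hsymp.2.1) hSinv₂

/-- under the symplectic relations, `K₁ = T S⁻¹` satisfies `Γ ∘ K₁* ∘ Γ = K₁`. -/
theorem stmt3 (Γ : H →ₛₗᵢ[starRingEnd ℂ] H) (hΓ : ∀ x, Γ (Γ x) = x)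
    (S T : H →L[ℂ] H) (hsymp : SympRel Γ S T)
    (Sinv : H →L[ℂ] H) (hSinv₁ : Sinv ∘L S = 1) (hSinv₂ : S ∘L Sinv = 1) :
    conjOp Γ (adjoint (T ∘L Sinv)) = T ∘L Sinv :=
  stmt3_general Γ hΓ S T hsymp Sinv hSinv₂
end
end

section
/- Let T be a bounded operator on a complex Hilbert space H. Then 1 + T*T is boundedly invertible, and ‖T∘(1 + T*T)⁻¹∘T*‖ ≤ ‖T‖²/(1 + ‖T‖²) < 1. -/
noncomputable section

open ContinuousLinearMap Filter
open scoped Topology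

variable {H : Type*} [NormedAddCommGroup H] [InnerProductSpace ℂ H] [CompleteSpace H]

/-! Since `T (1 + T* T) = (1 + T T*) T`, the operator `T (1 + T* T)⁻¹ T*` equals
`1 - (1 + T T*)⁻¹`. From `1 ≤ 1 + T T* ≤ 1 + ‖T‖²` and antitonicity of inversion on strictly
positive elements, `0 ≤ 1 - (1 + T T*)⁻¹ ≤ 1 - (1 + ‖T‖²)⁻¹ = ‖T‖² / (1 + ‖T‖²)`, and for
positive elements of a C⋆-algebra the order bound is a norm bound. -/

open Ring

section Ring

variable {R : Type*} [Ring R]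

lemma mul_ringInverse_one_add_mul_comm {a b : R} (hba : IsUnit (1 + b * a))
    (hab : IsUnit (1 + a * b)) : a * (1 + b * a)⁻¹ʳ = (1 + a * b)⁻¹ʳ * a := by
  have intertwine : a * (1 + b * a) = (1 + a * b) * a := by noncomm_ring
  calc a * (1 + b * a)⁻¹ʳ
      = (1 + a * b)⁻¹ʳ * ((1 + a * b) * a) * (1 + b * a)⁻¹ʳ := by
        rw [← mul_assoc, inverse_mul_cancel _ hab, one_mul]
    _ = (1 + a * b)⁻¹ʳ * a := by
        rw [← intertwine, mul_assoc, mul_assoc, mul_inverse_cancel _ hba, mul_one]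

lemma mul_ringInverse_one_add_mul_mul {a b : R} (hba : IsUnit (1 + b * a))
    (hab : IsUnit (1 + a * b)) : a * (1 + b * a)⁻¹ʳ * b = 1 - (1 + a * b)⁻¹ʳ := by
  rw [mul_ringInverse_one_add_mul_comm hba hab, mul_assoc]
  calc (1 + a * b)⁻¹ʳ * (a * b) = (1 + a * b)⁻¹ʳ * ((1 + a * b) - 1) := by
        rw [add_sub_cancel_left]
    _ = 1 - (1 + a * b)⁻¹ʳ := by rw [mul_sub, inverse_mul_cancel _ hab, mul_one]

end Ring

section CStarAlgebra

variable {A : Type*} [CStarAlgebra A] [PartialOrder A] [StarOrderedRing A]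

lemma isUnit_one_add_of_nonneg {x : A} (hx : 0 ≤ x) : IsUnit (1 + x) :=
  CStarAlgebra.isUnit_of_le 1 (le_add_of_nonneg_right hx)

lemma norm_one_sub_ringInverse_one_add_le {x : A} (hx : 0 ≤ x) :
    ‖1 - (1 + x)⁻¹ʳ‖ ≤ ‖x‖ / (1 + ‖x‖) := by
  set c := ‖x‖
  have hc : 0 < 1 + c := by positivity
  have upper : 1 + x ≤ algebraMap ℝ A (1 + c) := by
    rw [map_add, map_one]
    gcongr
    exact (IsSelfAdjoint.of_nonneg hx).le_algebraMap_norm_self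
  have one_add_pos : IsStrictlyPositive (1 + x) := isStrictlyPositive_one.add_nonneg hx
  have inverse_algebraMap : (algebraMap ℝ A (1 + c))⁻¹ʳ = algebraMap ℝ A (1 + c)⁻¹ := by
    symm
    rw [← one_mul (algebraMap ℝ A (1 + c))⁻¹ʳ,
      eq_mul_inverse_iff_mul_eq _ _ _ ((isUnit_iff_ne_zero.2 hc.ne').map _), ← map_mul,
      inv_mul_cancel₀ hc.ne', map_one]
  have lower : algebraMap ℝ A (1 + c)⁻¹ ≤ (1 + x)⁻¹ʳ :=
    inverse_algebraMap ▸ CStarAlgebra.ringInverse_le_ringInverse upper one_add_pos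
  have le_one : (1 + x)⁻¹ʳ ≤ 1 := by
    simpa only [inverse_one] using CStarAlgebra.ringInverse_le_ringInverse
      (le_add_of_nonneg_right hx) isStrictlyPositive_one
  refine (CStarAlgebra.norm_le_iff_le_algebraMap _ (by positivity) (sub_nonneg.2 le_one)).2 ?_
  calc 1 - (1 + x)⁻¹ʳ ≤ 1 - algebraMap ℝ A (1 + c)⁻¹ := sub_le_sub_left lower 1
    _ = algebraMap ℝ A (c / (1 + c)) := by
        rw [← map_one (algebraMap ℝ A), ← map_sub]
        congr 1
        field_simp
        ring

lemma norm_mul_ringInverse_one_add_star_mul_self_mul_star_le (a : A) :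
    ‖a * (1 + star a * a)⁻¹ʳ * star a‖ ≤ ‖a‖ ^ 2 / (1 + ‖a‖ ^ 2) := by
  rw [mul_ringInverse_one_add_mul_mul (isUnit_one_add_of_nonneg (star_mul_self_nonneg a))
    (isUnit_one_add_of_nonneg (mul_star_self_nonneg a))]
  simpa only [CStarRing.norm_self_mul_star, sq] using
    norm_one_sub_ringInverse_one_add_le (mul_star_self_nonneg a)

end CStarAlgebra

/-- `1 + T*T` is boundedly invertible and
`‖T (1 + T*T)⁻¹ T*‖ ≤ ‖T‖²/(1 + ‖T‖²) < 1`. -/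
theorem stmt11 (T : H →L[ℂ] H) :
    ∃ V : H →L[ℂ] H,
      V ∘L (1 + adjoint T ∘L T) = 1 ∧ (1 + adjoint T ∘L T) ∘L V = 1 ∧
      ‖T ∘L V ∘L adjoint T‖ ≤ ‖T‖ ^ 2 / (1 + ‖T‖ ^ 2) ∧
      ‖T‖ ^ 2 / (1 + ‖T‖ ^ 2) < 1 := by
  simp only [← star_eq_adjoint, ← mul_def]
  have hunit := isUnit_one_add_of_nonneg (star_mul_self_nonneg T)
  refine ⟨(1 + star T * T)⁻¹ʳ, inverse_mul_cancel _ hunit, mul_inverse_cancel _ hunit, ?_,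
    (div_lt_one (by positivity)).2 (lt_one_add _)⟩
  simpa only [mul_assoc] using norm_mul_ringInverse_one_add_star_mul_self_mul_star_le T
end
end

section
/- Let S, T be bounded operators on H and let Â be the block operator Â(φ,ψ) = (Sφ + T̄ψ, Tφ + S̄ψ) on H ⊕ H. Then for every t ∈ ℝ the exponential exp(tÂ) has the same block symmetry: (exp(tÂ))₂₂ = Γ∘(exp(tÂ))₁₁∘Γ and (exp(tÂ))₁₂ = Γ∘(exp(tÂ))₂₁∘Γ. -/
noncomputable section

open ContinuousLinearMap Filter
open scoped Topology

variable {H : Type*} [NormedAddCommGroup H] [InnerProductSpace ℂ H] [CompleteSpace H]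

/-! The real-linear involution `J (φ, ψ) = (Γ ψ, Γ φ)` of `H ⊕ H` commutes with `Â`, because of the
`Γ`-symmetric shape of its blocks. Viewing complex operators as real ones, commuting with `J`
survives multiplication by a real scalar and passing to the exponential (restriction of scalars
is a continuous ring homomorphism, so it commutes with `exp`). Finally, `B J = J B` read on
`(Γ f, 0)` says exactly `B (0, f) = (Γ B₂₁ Γ f, Γ B₁₁ Γ f)`. -/

section RestrictScalars

variable {𝕜 E : Type*} [RCLike 𝕜] [NormedAddCommGroup E] [NormedSpace 𝕜 E] [NormedSpace ℝ E]
  [IsScalarTower ℝ 𝕜 E]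

variable (E) in
def ContinuousLinearMap.restrictScalarsRingHom : (E →L[𝕜] E) →+* (E →L[ℝ] E) where
  toFun := restrictScalars ℝ
  map_one' := rfl
  map_mul' _ _ := rfl
  map_zero' := rfl
  map_add' _ _ := rfl

theorem ContinuousLinearMap.exp_restrictScalars [CompleteSpace E] (A : E →L[𝕜] E) :
    NormedSpace.exp (A.restrictScalars ℝ) = (NormedSpace.exp A).restrictScalars ℝ :=
  -- `map_exp` wants normed `ℚ`-algebras, which are not registered instances on operator algebras
  letI : NormedAlgebra ℚ (E →L[𝕜] E) := NormedAlgebra.restrictScalars ℚ 𝕜 _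
  letI : NormedAlgebra ℚ (E →L[ℝ] E) := NormedAlgebra.restrictScalars ℚ ℝ _
  (NormedSpace.map_exp (restrictScalarsRingHom E) (continuous_restrictScalars ℝ) A).symm

theorem Commute.real_smul_restrictScalars_right {J : E →L[ℝ] E} {A : E →L[𝕜] E}
    (h : Commute J (A.restrictScalars ℝ)) (t : ℝ) : Commute J ((t • A).restrictScalars ℝ) := by
  rw [restrictScalars_smul, Algebra.smul_def]
  exact (Algebra.commute_algebraMap_right t J).mul_right h

theorem Commute.exp_restrictScalars_right [CompleteSpace E] {J : E →L[ℝ] E} {A : E →L[𝕜] E}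
    (h : Commute J (A.restrictScalars ℝ)) :
    Commute J ((NormedSpace.exp A).restrictScalars ℝ) :=
  ContinuousLinearMap.exp_restrictScalars A ▸ h.exp_right

end RestrictScalars

section SwapConj

variable {H : Type*} [NormedAddCommGroup H] [InnerProductSpace ℂ H]

def swapConj (Γ : H →ₛₗᵢ[starRingEnd ℂ] H) : H2 H →L[ℝ] H2 H :=
  let ΓR : H →L[ℝ] H := AddMonoidHom.toRealLinearMap (Γ : H →+ H) Γ.continuous
  (WithLp.prodContinuousLinearEquiv 2 ℝ H H).symm.toContinuousLinearMap ∘L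
    ((ΓR ∘L snd ℝ H H).prod (ΓR ∘L fst ℝ H H)) ∘L
    (WithLp.prodContinuousLinearEquiv 2 ℝ H H).toContinuousLinearMap

theorem swapConj_mk2 (Γ : H →ₛₗᵢ[starRingEnd ℂ] H) (φ ψ : H) :
    swapConj Γ (mk2 φ ψ) = mk2 (Γ ψ) (Γ φ) := rfl

theorem commute_swapConj_of_apply_mk2 {Γ : H →ₛₗᵢ[starRingEnd ℂ] H} (hΓ : ∀ x, Γ (Γ x) = x)
    {S T : H →L[ℂ] H} {A : H2 H →L[ℂ] H2 H}
    (hA : ∀ φ ψ : H, A (mk2 φ ψ) = mk2 (S φ + conjOp Γ T ψ) (T φ + conjOp Γ S ψ)) :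
    Commute (swapConj Γ) (A.restrictScalars ℝ) := by
  ext x
  change swapConj Γ (A (mk2 (proj1 x) (proj2 x))) = A (swapConj Γ (mk2 (proj1 x) (proj2 x)))
  simp only [hA, swapConj_mk2, conjOp, comp_apply, LinearIsometry.coe_toContinuousLinearMap,
    map_add, hΓ, add_comm]

theorem blk_eq_conjOp_of_commute_swapConj {Γ : H →ₛₗᵢ[starRingEnd ℂ] H} (hΓ : ∀ x, Γ (Γ x) = x)
    {B : H2 H →L[ℂ] H2 H} (h : Commute (swapConj Γ) (B.restrictScalars ℝ)) :
    blk22 B = conjOp Γ (blk11 B) ∧ blk12 B = conjOp Γ (blk21 B) := by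
  have key (f : H) : B (mk2 0 f) = swapConj Γ (B (mk2 (Γ f) 0)) := by
    simpa [swapConj_mk2, hΓ] using (DFunLike.congr_fun h (mk2 (Γ f) 0)).symm
  constructor <;> ext f
  · exact congrArg proj2 (key f)
  · exact congrArg proj1 (key f)

end SwapConj

/-- `exp(tÂ)` has the block symmetry `(exp(tÂ))₂₂ = Γ (exp(tÂ))₁₁ Γ` and
`(exp(tÂ))₁₂ = Γ (exp(tÂ))₂₁ Γ`. -/
theorem stmt16 (Γ : H →ₛₗᵢ[starRingEnd ℂ] H) (hΓ : ∀ x, Γ (Γ x) = x)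
    (S T : H →L[ℂ] H) (Ahat : H2 H →L[ℂ] H2 H)
    (hA : ∀ φ ψ : H,
      Ahat (mk2 φ ψ) = mk2 (S φ + conjOp Γ T ψ) (T φ + conjOp Γ S ψ)) :
    ∀ t : ℝ,
      blk22 (NormedSpace.exp (t • Ahat)) =
        conjOp Γ (blk11 (NormedSpace.exp (t • Ahat))) ∧
      blk12 (NormedSpace.exp (t • Ahat)) =
        conjOp Γ (blk21 (NormedSpace.exp (t • Ahat))) := by
  intro t
  have hJ : Commute (swapConj Γ) ((t • Ahat).restrictScalars ℝ) :=
    (commute_swapConj_of_apply_mk2 hΓ hA).real_smul_restrictScalars_right t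
  exact blk_eq_conjOp_of_commute_swapConj hΓ hJ.exp_restrictScalars_right
end
end
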